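/- Under the variable–variable and variable–check blocks of covariance evolution with their initial conditions, for all s ∈ L, j ∈ R̄ and all y ∈ (0,1] one has δ^{l_s,r_j}(y) = [F·(s l̂_s/e) − ε l̂_s (y^s−1)]·((x'/x) G_j − 1_{j=1}) − (s l̂_s/e) G_j ((F'+x)/2 − ε x y^s). (Theorem 1, equation (2).) -/

import Mathlib

open Finset

namespace LDPC

/-- λ(y) = Σ_{k∈L} λ_k y^{k-1} -/
noncomputable def lamP (L : Finset ℕ) (lam : ℕ → ℝ) (y : ℝ) : ℝ :=
  ∑ k ∈ L, lam k * y ^ (k - 1)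

/-- λ'(y) = Σ_{k∈L} (k-1) λ_k y^{k-2} -/
noncomputable def lamD (L : Finset ℕ) (lam : ℕ → ℝ) (y : ℝ) : ℝ :=
  ∑ k ∈ L, ((k : ℝ) - 1) * lam k * y ^ (k - 2)

/-- λ''(y) = Σ_{k∈L} (k-1)(k-2) λ_k y^{k-3} -/
noncomputable def lamDD (L : Finset ℕ) (lam : ℕ → ℝ) (y : ℝ) : ℝ :=
  ∑ k ∈ L, ((k : ℝ) - 1) * ((k : ℝ) - 2) * lam k * y ^ (k - 3)

/-- ρ(z) = Σ_{k∈R} ρ_k z^{k-1} -/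
noncomputable def rhoP (R : Finset ℕ) (rho : ℕ → ℝ) (z : ℝ) : ℝ :=
  ∑ k ∈ R, rho k * z ^ (k - 1)

/-- ρ'(z) = Σ_{k∈R} (k-1) ρ_k z^{k-2} -/
noncomputable def rhoD (R : Finset ℕ) (rho : ℕ → ℝ) (z : ℝ) : ℝ :=
  ∑ k ∈ R, ((k : ℝ) - 1) * rho k * z ^ (k - 2)

/-- x = ελ(y) -/
noncomputable def xF (L : Finset ℕ) (lam : ℕ → ℝ) (ε y : ℝ) : ℝ := ε * lamP L lam y

/-- x' = ελ'(y) -/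
noncomputable def xD (L : Finset ℕ) (lam : ℕ → ℝ) (ε y : ℝ) : ℝ := ε * lamD L lam y

/-- x'' = ελ''(y) -/
noncomputable def xDD (L : Finset ℕ) (lam : ℕ → ℝ) (ε y : ℝ) : ℝ := ε * lamDD L lam y

/-- e = xy -/
noncomputable def eF (L : Finset ℕ) (lam : ℕ → ℝ) (ε y : ℝ) : ℝ := xF L lam ε y * y

/-- a = (x'y + x)/x -/
noncomputable def aF (L : Finset ℕ) (lam : ℕ → ℝ) (ε y : ℝ) : ℝ :=
  (xD L lam ε y * y + xF L lam ε y) / xF L lam ε y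

/-- l̂_k(y) = ε λ_k y^k -/
noncomputable def lhat (lam : ℕ → ℝ) (ε : ℝ) (k : ℕ) (y : ℝ) : ℝ := ε * lam k * y ^ k

/-- r̂_j(y); for j = 1 the special formula x(y-1+ρ(1-x)), else Σ_{i∈R} ρ_i C(i-1,j-1) x^j (1-x)^{i-j}. -/
noncomputable def rhat (L R : Finset ℕ) (lam rho : ℕ → ℝ) (ε : ℝ) (j : ℕ) (y : ℝ) : ℝ :=
  if j = 1 then xF L lam ε y * (y - 1 + rhoP R rho (1 - xF L lam ε y))
  else ∑ i ∈ R, rho i * ((i - 1).choose (j - 1) : ℝ) * xF L lam ε y ^ j *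
    (1 - xF L lam ε y) ^ (i - j)

/-- G_j(y) = j(r̂_{j+1} - r̂_j)/x for j ≤ d_c - 1, and G_{d_c}(y) = -d_c r̂_{d_c}/x. -/
noncomputable def Gf (L R : Finset ℕ) (lam rho : ℕ → ℝ) (ε : ℝ) (dc j : ℕ) (y : ℝ) : ℝ :=
  if j = dc then -((dc : ℝ) * rhat L R lam rho ε dc y) / xF L lam ε y
  else (j : ℝ) * (rhat L R lam rho ε (j + 1) y - rhat L R lam rho ε j y) / xF L lam ε y

/-- F(y) = Σ_{k∈L} (λ_k/k)[ε²(y^k-1)² + ε(y^k-1)] -/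
noncomputable def Ff (L : Finset ℕ) (lam : ℕ → ℝ) (ε y : ℝ) : ℝ :=
  ∑ k ∈ L, lam k / (k : ℝ) * (ε ^ 2 * (y ^ k - 1) ^ 2 + ε * (y ^ k - 1))

/-- F'(y) = 2Σ_{k∈L} ε²λ_k y^{2k-1} - (ε - ε̃)x -/
noncomputable def Fd (L : Finset ℕ) (lam : ℕ → ℝ) (ε y : ℝ) : ℝ :=
  2 * ∑ k ∈ L, ε ^ 2 * lam k * y ^ (2 * k - 1) - (ε - (1 - ε)) * xF L lam ε y

/-- V_{i,j}(y) = Σ_{s∈R} sρ_s C(s-1,i-1)C(s-1,j-1) x^{i+j} (1-x)^{2s-i-j} -/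
noncomputable def Vf (L R : Finset ℕ) (lam rho : ℕ → ℝ) (ε : ℝ) (i j : ℕ) (y : ℝ) : ℝ :=
  ∑ s ∈ R, (s : ℝ) * rho s * ((s - 1).choose (i - 1) : ℝ) * ((s - 1).choose (j - 1) : ℝ) *
    xF L lam ε y ^ (i + j) * (1 - xF L lam ε y) ^ (2 * s - i - j)

/-- The variable–variable block of covariance evolution, with its initial conditions. -/
def CEvv (L : Finset ℕ) (lam : ℕ → ℝ) (ε : ℝ) (δll : ℕ → ℕ → ℝ → ℝ) : Prop :=
  (∀ k ∈ L, ∀ s ∈ L, ∀ y ∈ Set.Ioc (0 : ℝ) 1,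
    HasDerivWithinAt (δll k s)
      (-(xF L lam ε y) *
          (((s : ℝ) * lhat lam ε s y / eF L lam ε y ^ 2) * ∑ t ∈ L, δll k t y
            + ((k : ℝ) * lhat lam ε k y / eF L lam ε y ^ 2) * ∑ t ∈ L, δll s t y
            - (((k : ℝ) + (s : ℝ)) / eF L lam ε y) * δll k s y)
        - xF L lam ε y * (k : ℝ) * (s : ℝ) * (lhat lam ε k y / eF L lam ε y) *
            ((if k = s then (1 : ℝ) else 0) - lhat lam ε s y / eF L lam ε y))
      (Set.Ioc 0 1) y)
  ∧ ∀ k ∈ L, ∀ s ∈ L,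
      δll k s 1 = (if k = s then (1 : ℝ) else 0) * (k : ℝ) * lam k * ε * (1 - ε)

/-- The variable–check block of covariance evolution, with its initial conditions. -/
def CEvc (L R : Finset ℕ) (lam rho : ℕ → ℝ) (ε : ℝ) (dc : ℕ)
    (δll δlr : ℕ → ℕ → ℝ → ℝ) : Prop :=
  (∀ k ∈ L, ∀ j ∈ Finset.Icc 1 (dc - 1), ∀ y ∈ Set.Ioc (0 : ℝ) 1,
    HasDerivWithinAt (δlr k j)
      (2 * (xD L lam ε y / eF L lam ε y) * Gf L R lam rho ε dc j y * ∑ t ∈ L, δll k t y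
        - (Gf L R lam rho ε dc j y / y ^ 2) * ∑ i ∈ L, ((i : ℝ) - 1) * δll k i y
        - xF L lam ε y * (aF L lam ε y - (k : ℝ)) * ((k : ℝ) * lhat lam ε k y / eF L lam ε y)
            * (Gf L R lam rho ε dc j y / y)
        - ((k : ℝ) * lhat lam ε k y / (eF L lam ε y * y)) * ∑ t ∈ L, δlr t j y
        + ((k : ℝ) / y) * δlr k j y
        - (j : ℝ) * (xD L lam ε y / xF L lam ε y) *
            ((if j + 1 = dc then
                (∑ t ∈ L, δll k t y) - ∑ j' ∈ Finset.Icc 1 (dc - 1), δlr k j' y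
              else δlr k (j + 1) y) - δlr k j y))
      (Set.Ioc 0 1) y)
  ∧ ∀ k ∈ L, ∀ j ∈ Finset.Icc 1 (dc - 1),
      δlr k j 1 = -((k : ℝ) * lam k * ε * (1 - ε)) * Gf L R lam rho ε dc j 1

/-- The check–check block of covariance evolution, with symmetry and initial conditions. -/
def CErr (L R : Finset ℕ) (lam rho : ℕ → ℝ) (ε : ℝ) (dc : ℕ)
    (δlr δrr : ℕ → ℕ → ℝ → ℝ) : Prop :=
  (∀ i ∈ Finset.Icc 1 (dc - 1), ∀ j ∈ Finset.Icc 1 (dc - 1), ∀ y ∈ Set.Ioc (0 : ℝ) 1,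
      δrr i j y = δrr j i y)
  ∧ (∀ i ∈ Finset.Icc 1 (dc - 1), ∀ j ∈ Finset.Icc 1 (dc - 1), ∀ y ∈ Set.Ioc (0 : ℝ) 1,
    HasDerivWithinAt (δrr i j)
      (-(xD L lam ε y / xF L lam ε y) *
          ((i : ℝ) * (if i + 1 = dc then
                (∑ k ∈ L, δlr k j y) - ∑ i' ∈ Finset.Icc 1 (dc - 1), δrr i' j y
              else δrr (i + 1) j y)
            + (j : ℝ) * (if j + 1 = dc then
                (∑ k ∈ L, δlr k i y) - ∑ i' ∈ Finset.Icc 1 (dc - 1), δrr i' i y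
              else δrr (j + 1) i y)
            - ((i : ℝ) + (j : ℝ)) * δrr i j y)
        + (∑ k ∈ L, ((2 * aF L lam ε y - (k : ℝ) - 1) / y ^ 2) *
            (δlr k j y * Gf L R lam rho ε dc i y + δlr k i y * Gf L R lam rho ε dc j y))
        - xF L lam ε y *
            (((xDD L lam ε y * xF L lam ε y - xD L lam ε y ^ 2) / xF L lam ε y ^ 2) *
                Gf L R lam rho ε dc i y * Gf L R lam rho ε dc j y
              + (i : ℝ) * (j : ℝ) * (xD L lam ε y / xF L lam ε y ^ 2) *
                  ((if i = j then rhat L R lam rho ε (j + 1) y + rhat L R lam rho ε j y else 0)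
                    - (if i = j + 1 then rhat L R lam rho ε i y else 0)
                    - (if j = i + 1 then rhat L R lam rho ε j y else 0))))
      (Set.Ioc 0 1) y)
  ∧ ∀ i ∈ Finset.Icc 1 (dc - 1), ∀ j ∈ Finset.Icc 1 (dc - 1),
      δrr i j 1 = (if i = j then (i : ℝ) * rhat L R lam rho ε i 1 else 0)
        - Vf L R lam rho ε i j 1
        + (∑ k ∈ L, ((k : ℝ) - 1) * lam k) * ε * (1 - ε) *
            Gf L R lam rho ε dc i 1 * Gf L R lam rho ε dc j 1

end LDPC

/-
Both blocks are linear ODE systems in `y`, so the closed forms are checked rather than derived.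
Explicit candidates `vvSol` (for `δ^{l_k,l_s}`) and `vcSol` (the right-hand side of (2)) satisfy
both systems and the initial conditions at `y = 1`. Once the sums over `L` are evaluated
(`Σ l̂_t = e`, `Σ t l̂_t = y (x'y + x)`, `Σ t² l̂_t = y (x''y² + 3x'y + x)`), this is calculus and
algebra, together with two facts about the check nodes: the recursion
`G_j' = -(x'/x) (j (G_{j+1} - G_j) + G_j) - 1_{j=1}`, and `Σ_{j<d_c} G_j = -y - G_{d_c}`. The
second follows by summation by parts from `Σ_j r̂_j = e`, which is the binomial theorem; it makes
the closure `δ^{l_k,r_{d_c}} = δ^{l_k,l_Σ} - Σ_j δ^{l_k,r_j}` consistent with `vcSol` at `j = d_c`.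

On every `[y₀, 1]` with `y₀ > 0` the homogeneous parts of the systems have bounded coefficients
(`0 ≤ l̂_s ≤ e`, and `x'/x` is continuous). Grönwall's inequality, run backwards from `y = 1`,
therefore gives `δ^{l,l} = vvSol`, and then `δ^{l,r} = vcSol`.
-/

open Set in
theorem eq_zero_of_abs_deriv_le_sum_abs_of_eq_zero_left {ι : Type*} (S : Finset ι)
    {Δ Δ' : ι → ℝ → ℝ} {K : ι → ℝ} {a b : ℝ}
    (hcont : ∀ i ∈ S, ContinuousOn (Δ i) (Icc a b))
    (hderiv : ∀ i ∈ S, ∀ t ∈ Ioc a b, HasDerivWithinAt (Δ i) (Δ' i t) (Iic t) t)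
    (hbound : ∀ i ∈ S, ∀ t ∈ Ioc a b, |Δ' i t| ≤ K i * ∑ j ∈ S, |Δ j t|)
    (hb : ∀ i ∈ S, Δ i b = 0) :
    ∀ i ∈ S, ∀ t ∈ Icc a b, Δ i t = 0 := by
  -- Reverse time and apply the forward Grönwall lemma in the sup-normed space `S → ℝ`.
  set C := ∑ i ∈ S, |K i|
  have hneg : MapsTo Neg.neg (Icc (-b) (-a)) (Icc a b) :=
    fun u hu => ⟨le_neg.mp hu.2, neg_le.mp hu.1⟩
  have hneg' : MapsTo Neg.neg (Ico (-b) (-a)) (Ioc a b) :=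
    fun u hu => ⟨lt_neg.mp hu.2, neg_le.mp hu.1⟩
  have hsum_le (u : ℝ) : ∑ j ∈ S, |Δ j (-u)| ≤ S.card * ‖fun (j : S) => Δ j (-u)‖ := by
    rw [← Finset.sum_attach, ← nsmul_eq_mul, ← Finset.card_attach]
    exact Finset.sum_le_card_nsmul _ _ _ fun j _ => norm_le_pi_norm (fun (j : S) => Δ j (-u)) j
  have hK (i : S) : K i ≤ C :=
    (le_abs_self _).trans (Finset.single_le_sum (f := fun i => |K i|) (fun _ _ => abs_nonneg _) i.2)
  have key := eq_zero_of_abs_deriv_le_mul_abs_self_of_eq_zero_right (K := C * S.card)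
    (f := fun u (i : S) => Δ i (-u)) (f' := fun u (i : S) => -Δ' i (-u))
    (continuousOn_pi.2 fun i => (hcont i i.2).comp continuousOn_neg hneg)
    (fun u hu => hasDerivWithinAt_pi.2 fun i =>
      ((hderiv i i.2 (-u) (hneg' hu)).comp u (hasDerivAt_neg u).hasDerivWithinAt
        fun v hv => neg_le_neg (Set.mem_Ici.mp hv)).congr_deriv (mul_neg_one _))
    (funext fun i => by simpa using hb i i.2)
    (fun u hu => (pi_norm_le_iff_of_nonneg (by positivity)).2 fun i =>
      calc ‖-Δ' i (-u)‖ = |Δ' i (-u)| := by rw [norm_neg, Real.norm_eq_abs]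
        _ ≤ K i * ∑ j ∈ S, |Δ j (-u)| := hbound i i.2 (-u) (hneg' hu)
        _ ≤ C * (S.card * ‖fun (j : S) => Δ j (-u)‖) := by gcongr; exacts [hK i, hsum_le u]
        _ = _ := by ring)
  intro i hi t ht
  simpa using congrFun (key (-t) ⟨neg_le_neg ht.2, neg_le_neg ht.1⟩) ⟨i, hi⟩

open Set in
theorem eqOn_Ioc_of_abs_deriv_sub_le {ι : Type*} (S : Finset ι) {f g f' g' : ι → ℝ → ℝ}
    {K : ι → ℝ} {a b : ℝ}
    (hf : ∀ i ∈ S, ∀ t ∈ Ioc a b, HasDerivWithinAt (f i) (f' i t) (Ioc a b) t)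
    (hg : ∀ i ∈ S, ∀ t ∈ Ioc a b, HasDerivWithinAt (g i) (g' i t) (Ioc a b) t)
    (hbound : ∀ i ∈ S, ∀ t ∈ Ioc a b, |f' i t - g' i t| ≤ K i * ∑ j ∈ S, |f j t - g j t|)
    (hb : ∀ i ∈ S, f i b = g i b) :
    ∀ i ∈ S, ∀ t ∈ Ioc a b, f i t = g i t := by
  intro i hi t₀ ht₀
  have hsub : Icc t₀ b ⊆ Ioc a b := Icc_subset_Ioc ht₀.1 le_rfl
  have hsub' : Ioc t₀ b ⊆ Ioc a b := hsub.trans' Ioc_subset_Icc_self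
  have hzero := eq_zero_of_abs_deriv_le_sum_abs_of_eq_zero_left S
    (Δ := fun i t => f i t - g i t) (Δ' := fun i t => f' i t - g' i t) (a := t₀)
    (fun i hi t ht =>
      ((hf i hi t (hsub ht)).sub (hg i hi t (hsub ht))).continuousWithinAt.mono hsub)
    (fun i hi t ht => ((hf i hi t (hsub' ht)).sub (hg i hi t (hsub' ht))).mono_of_mem_nhdsWithin
      (Ioc_mem_nhdsLE_of_mem (hsub' ht)))
    (fun i hi t ht => hbound i hi t (hsub' ht)) (fun i hi => sub_eq_zero.2 (hb i hi))
  exact sub_eq_zero.1 (hzero i hi t₀ ⟨le_rfl, ht₀.2⟩)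

section ProductSums

variable {α β : Type*} {S : Finset α} {T : Finset β} (F : α → β → ℝ)

theorem abs_le_sum_abs_product {a : α} {b : β} (ha : a ∈ S) (hb : b ∈ T) :
    |F a b| ≤ ∑ p ∈ S ×ˢ T, |F p.1 p.2| :=
  Finset.single_le_sum (f := fun p => |F p.1 p.2|) (fun _ _ => abs_nonneg _)
    (Finset.mem_product.2 ⟨ha, hb⟩ : (a, b) ∈ S ×ˢ T)

theorem abs_sum_row_le_sum_abs_product {a : α} (ha : a ∈ S) :
    |∑ b ∈ T, F a b| ≤ ∑ p ∈ S ×ˢ T, |F p.1 p.2| := by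
  rw [Finset.sum_product]
  exact (Finset.abs_sum_le_sum_abs _ _).trans (Finset.single_le_sum
    (f := fun a => ∑ b ∈ T, |F a b|) (fun _ _ => Finset.sum_nonneg fun _ _ => abs_nonneg _) ha)

theorem abs_sum_col_le_sum_abs_product {b : β} (hb : b ∈ T) :
    |∑ a ∈ S, F a b| ≤ ∑ p ∈ S ×ˢ T, |F p.1 p.2| := by
  rw [Finset.sum_product_right]
  exact (Finset.abs_sum_le_sum_abs _ _).trans (Finset.single_le_sum
    (f := fun b => ∑ a ∈ S, |F a b|) (fun _ _ => Finset.sum_nonneg fun _ _ => abs_nonneg _) hb)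

end ProductSums

theorem abs_mul_le_mul_of_le {c C X N : ℝ} (hc : 0 ≤ c) (hcC : c ≤ C) (hX : |X| ≤ N) :
    |c * X| ≤ C * N := by
  rw [abs_mul, abs_of_nonneg hc]
  exact mul_le_mul hcC hX (abs_nonneg _) (hc.trans hcC)

theorem sum_Icc_mul_sub {R : Type*} [CommRing R] (g : ℕ → R) (n : ℕ) :
    ∑ j ∈ Finset.Icc 1 n, (j : R) * (g (j + 1) - g j)
      = (n + 1) * g (n + 1) - ∑ j ∈ Finset.Icc 1 (n + 1), g j := by
  induction n with
  | zero => simp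
  | succ n ih =>
    rw [Finset.sum_Icc_succ_top (by omega), ih, Finset.sum_Icc_succ_top (by omega : 1 ≤ n + 2)]
    push_cast
    ring

theorem sum_Icc_choose_mul_pow {R : Type*} [CommRing R] (x : R) {i N : ℕ} (hi : 1 ≤ i)
    (hiN : i ≤ N) :
    ∑ j ∈ Finset.Icc 1 N, ((i - 1).choose (j - 1) : R) * x ^ j * (1 - x) ^ (i - j) = x := by
  rw [← Finset.Ico_add_one_right_eq_Icc, Finset.sum_Ico_eq_sum_range, Nat.add_sub_cancel]
  have hvanish : ∀ k ∈ Finset.range N, k ∉ Finset.range (i - 1 + 1) →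
      ((i - 1).choose (1 + k - 1) : R) * x ^ (1 + k) * (1 - x) ^ (i - (1 + k)) = 0 := by
    intro k _ hk
    rw [Finset.mem_range, not_lt] at hk
    rw [Nat.choose_eq_zero_of_lt (by omega)]
    simp
  rw [← Finset.sum_subset (Finset.range_subset_range.2 (by omega)) hvanish]
  calc _ = x * ∑ k ∈ Finset.range (i - 1 + 1),
          x ^ k * (1 - x) ^ (i - 1 - k) * ((i - 1).choose k : R) := by
        rw [Finset.mul_sum]
        refine Finset.sum_congr rfl fun k _ => ?_
        rw [Nat.add_sub_cancel_left, Nat.sub_add_eq, pow_add]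
        ring
    _ = x := by rw [← add_pow, add_sub_cancel, one_pow, mul_one]

theorem hasDerivAt_pow_of_ne_zero {𝕜 : Type*} [NontriviallyNormedField 𝕜] {y : 𝕜} (k : ℕ)
    (hy : y ≠ 0) :
    HasDerivAt (fun y => y ^ k) (k * y ^ k / y) y := by
  refine (hasDerivAt_pow k y).congr_deriv ?_
  rcases Nat.eq_zero_or_pos k with rfl | hk
  · simp
  · rw [← pow_sub_mul_pow y hk, pow_one]
    field_simp

theorem hasDerivAt_sum_mul_pow_sub {𝕜 : Type*} [NontriviallyNormedField 𝕜] {L : Finset ℕ}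
    (c : ℕ → 𝕜) {m : ℕ} (hm : ∀ k ∈ L, m ≤ k) (y : 𝕜) :
    HasDerivAt (fun y => ∑ k ∈ L, c k * y ^ (k - m))
      (∑ k ∈ L, ((k : 𝕜) - m) * c k * y ^ (k - (m + 1))) y := by
  refine HasDerivAt.fun_sum fun k hk =>
    ((hasDerivAt_pow (k - m) y).const_mul (c k)).congr_deriv ?_
  rw [Nat.cast_sub (hm k hk), Nat.sub_sub]
  ring

namespace LDPC

section VariableNodes

variable {L : Finset ℕ} {lam : ℕ → ℝ} {ε y : ℝ}

theorem hasDerivAt_lamP (hL : ∀ k ∈ L, 1 ≤ k) : HasDerivAt (lamP L lam) (lamD L lam y) y :=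
  (hasDerivAt_sum_mul_pow_sub lam hL y).congr_deriv (by simp [lamD])

theorem hasDerivAt_lamD (hL : ∀ k ∈ L, 2 ≤ k) : HasDerivAt (lamD L lam) (lamDD L lam y) y := by
  refine (hasDerivAt_sum_mul_pow_sub (fun k => ((k : ℝ) - 1) * lam k) hL y).congr_deriv
    (Finset.sum_congr rfl fun k _ => ?_)
  push_cast
  ring

theorem hasDerivAt_xF (hL : ∀ k ∈ L, 1 ≤ k) : HasDerivAt (xF L lam ε) (xD L lam ε y) y :=
  (hasDerivAt_lamP hL).const_mul ε

theorem hasDerivAt_xD (hL : ∀ k ∈ L, 2 ≤ k) : HasDerivAt (xD L lam ε) (xDD L lam ε y) y :=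
  (hasDerivAt_lamD hL).const_mul ε

theorem hasDerivAt_lhat (k : ℕ) (hy : y ≠ 0) :
    HasDerivAt (lhat lam ε k) (k * lhat lam ε k y / y) y :=
  ((hasDerivAt_pow_of_ne_zero k hy).const_mul (ε * lam k)).congr_deriv (by rw [lhat]; ring)

theorem sum_lhat (hL : ∀ k ∈ L, 1 ≤ k) : ∑ t ∈ L, lhat lam ε t y = eF L lam ε y := by
  simp only [eF, xF, lamP, Finset.mul_sum, Finset.sum_mul]
  refine Finset.sum_congr rfl fun t ht => ?_
  rw [lhat, ← pow_sub_mul_pow y (hL t ht), pow_one]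
  ring

theorem sum_mul_lhat (hL : ∀ k ∈ L, 2 ≤ k) :
    ∑ t ∈ L, (t : ℝ) * lhat lam ε t y = y * (xD L lam ε y * y + xF L lam ε y) := by
  simp only [xD, xF, lamD, lamP, Finset.mul_sum, Finset.sum_mul, ← Finset.sum_add_distrib]
  refine Finset.sum_congr rfl fun t ht => ?_
  rw [lhat, ← pow_sub_mul_pow y (hL t ht), show t - 1 = t - 2 + 1 by have := hL t ht; omega]
  ring

theorem sum_sq_mul_lhat (hL : ∀ k ∈ L, 2 ≤ k) :
    ∑ t ∈ L, (t : ℝ) ^ 2 * lhat lam ε t y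
      = y * (xDD L lam ε y * y ^ 2 + 3 * xD L lam ε y * y + xF L lam ε y) := by
  simp only [xDD, xD, xF, lamDD, lamD, lamP, Finset.mul_sum, Finset.sum_mul,
    ← Finset.sum_add_distrib]
  refine Finset.sum_congr rfl fun t ht => ?_
  obtain rfl | h3 := (hL t ht).eq_or_lt
  · norm_num [lhat]
    ring
  · rw [lhat, ← pow_sub_mul_pow y (show 3 ≤ t by omega), show t - 1 = t - 3 + 2 by omega,
      show t - 2 = t - 3 + 1 by omega]
    ring

theorem Fd_eq_sum_lhat_mul_pow (hL : ∀ k ∈ L, 1 ≤ k) (hy : y ≠ 0) :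
    Fd L lam ε y
      = (2 * ε * ∑ t ∈ L, lhat lam ε t y * y ^ t - (ε - (1 - ε)) * eF L lam ε y) / y := by
  have h : y * ∑ t ∈ L, ε ^ 2 * lam t * y ^ (2 * t - 1) = ε * ∑ t ∈ L, lhat lam ε t y * y ^ t := by
    simp only [Finset.mul_sum]
    refine Finset.sum_congr rfl fun t ht => ?_
    have hpow : y * y ^ (2 * t - 1) = y ^ t * y ^ t := by
      rw [← pow_succ', ← pow_add]
      congr 1
      grind
    rw [lhat]
    linear_combination ε ^ 2 * lam t * hpow
  rw [eq_div_iff hy, Fd, eF]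
  linear_combination 2 * h

theorem hasDerivAt_Ff (hL : ∀ k ∈ L, 1 ≤ k) :
    HasDerivAt (Ff L lam ε) (Fd L lam ε y) y := by
  refine (HasDerivAt.fun_sum (u := L) fun k _ => (((((hasDerivAt_pow k y).sub_const 1).pow 2
    |>.const_mul (ε ^ 2)).add (((hasDerivAt_pow k y).sub_const 1).const_mul ε)).const_mul
    (lam k / k))).congr_deriv ?_
  simp only [Fd, xF, lamP, Finset.mul_sum, ← Finset.sum_sub_distrib]
  refine Finset.sum_congr rfl fun k hk => ?_
  have hk0 : (k : ℝ) ≠ 0 := by have := hL k hk; positivity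
  rw [show 2 * k - 1 = k + (k - 1) by grind, pow_add]
  field_simp
  ring

theorem hasDerivAt_Fd (hL : ∀ k ∈ L, 1 ≤ k) (hy : y ≠ 0) :
    HasDerivAt (Fd L lam ε)
      (2 * ε * (2 * ∑ t ∈ L, (t : ℝ) * lhat lam ε t y * y ^ t - ∑ t ∈ L, lhat lam ε t y * y ^ t)
          / y ^ 2
        - (ε - (1 - ε)) * xD L lam ε y) y := by
  refine ((HasDerivAt.fun_sum (u := L) fun t _ =>
    (hasDerivAt_pow (2 * t - 1) y).const_mul (ε ^ 2 * lam t)).const_mul 2 |>.sub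
    ((hasDerivAt_xF hL).const_mul _)).congr_deriv ?_
  congr 1
  simp only [eq_div_iff (pow_ne_zero 2 hy), Finset.mul_sum, Finset.sum_mul,
    ← Finset.sum_sub_distrib]
  refine Finset.sum_congr rfl fun t ht => ?_
  have ht1 := hL t ht
  have hpow : y ^ (2 * t - 1 - 1) * y ^ 2 = y ^ t * y ^ t := by
    rw [← pow_add, ← pow_add]
    congr 1
    omega
  rw [Nat.cast_sub (by omega), lhat]
  push_cast
  linear_combination 2 * ε ^ 2 * lam t * (2 * t - 1) * hpow

theorem xF_pos (hLne : L.Nonempty) (hlamPos : ∀ k ∈ L, 0 < lam k) (hε : 0 < ε) (hy : 0 < y) :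
    0 < xF L lam ε y :=
  mul_pos hε (Finset.sum_pos (fun k hk => mul_pos (hlamPos k hk) (pow_pos hy _)) hLne)

theorem exists_abs_xD_div_xF_le (hL : ∀ k ∈ L, 2 ≤ k) (hLne : L.Nonempty)
    (hlamPos : ∀ k ∈ L, 0 < lam k) (hε : 0 < ε) {a b : ℝ} (ha : 0 < a) :
    ∃ C, ∀ t ∈ Set.Icc a b, |xD L lam ε t / xF L lam ε t| ≤ C := by
  have hL1 : ∀ k ∈ L, 1 ≤ k := fun k hk => one_le_two.trans (hL k hk)
  obtain ⟨C, hC⟩ := (isCompact_Icc (a := a) (b := b)).exists_bound_of_continuousOn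
    (f := fun t => xD L lam ε t / xF L lam ε t) fun t ht =>
      ((hasDerivAt_xD hL).continuousAt.div (hasDerivAt_xF hL1).continuousAt
        (xF_pos hLne hlamPos hε (ha.trans_le ht.1)).ne').continuousWithinAt
  exact ⟨C, fun t ht => (Real.norm_eq_abs _).symm.trans_le (hC t ht)⟩

theorem mul_lhat_div_eF_div_mem_Icc (hL : ∀ k ∈ L, 1 ≤ k) (hlamPos : ∀ k ∈ L, 0 < lam k)
    (hε : 0 < ε) {a : ℝ} (ha : 0 < a) (hay : a ≤ y) {s : ℕ} (hs : s ∈ L) :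
    s * (lhat lam ε s y / eF L lam ε y) / y ∈ Set.Icc 0 (s / a) := by
  have hy : 0 < y := ha.trans_le hay
  have hnonneg : ∀ t ∈ L, 0 ≤ lhat lam ε t y := fun t ht =>
    (mul_pos (mul_pos hε (hlamPos t ht)) (pow_pos hy t)).le
  have hle : lhat lam ε s y ≤ eF L lam ε y :=
    sum_lhat (lam := lam) (ε := ε) (y := y) hL ▸ Finset.single_le_sum hnonneg hs
  have he : 0 < eF L lam ε y := mul_pos (xF_pos ⟨s, hs⟩ hlamPos hε hy) hy
  have hfrac : lhat lam ε s y / eF L lam ε y ≤ 1 := (div_le_one he).2 hle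
  have hs0 := hnonneg s hs
  refine ⟨by positivity, ?_⟩
  calc _ ≤ s * 1 / y := by gcongr
    _ ≤ s / a := by rw [mul_one]; gcongr

theorem xF_one (hlamSum : ∑ k ∈ L, lam k = 1) : xF L lam ε 1 = ε := by
  simp [xF, lamP, hlamSum]

theorem Ff_one : Ff L lam ε 1 = 0 := by
  simp [Ff]

theorem Fd_one (hlamSum : ∑ k ∈ L, lam k = 1) : Fd L lam ε 1 = ε := by
  rw [Fd, xF_one hlamSum]
  simp only [one_pow, mul_one, ← Finset.mul_sum, hlamSum]
  ring

end VariableNodes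

section CheckNodes

variable {L R : Finset ℕ} {lam rho : ℕ → ℝ} {ε y : ℝ} {dc : ℕ}

theorem hasDerivAt_rhoP (hR : ∀ k ∈ R, 1 ≤ k) : HasDerivAt (rhoP R rho) (rhoD R rho y) y :=
  (hasDerivAt_sum_mul_pow_sub rho hR y).congr_deriv (by simp [rhoD])

theorem rhat_of_ne_one {j : ℕ} (hj : j ≠ 1) :
    rhat L R lam rho ε j y = ∑ i ∈ R, rho i * ((i - 1).choose (j - 1) : ℝ) * xF L lam ε y ^ j *
      (1 - xF L lam ε y) ^ (i - j) :=
  if_neg hj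

theorem rhat_eq_zero {j : ℕ} (hj : 2 ≤ j) (hR : ∀ i ∈ R, i < j) : rhat L R lam rho ε j y = 0 := by
  rw [rhat_of_ne_one (by omega)]
  refine Finset.sum_eq_zero fun i hi => ?_
  rw [Nat.choose_eq_zero_of_lt (by have := hR i hi; omega)]
  simp

theorem rhat_two (hR : ∀ i ∈ R, 1 ≤ i) :
    rhat L R lam rho ε 2 y = xF L lam ε y ^ 2 * rhoD R rho (1 - xF L lam ε y) := by
  rw [rhat_of_ne_one (by omega), rhoD, Finset.mul_sum]
  refine Finset.sum_congr rfl fun i hi => ?_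
  rw [Nat.choose_one_right, Nat.cast_sub (hR i hi), show i - 2 = i - 1 - 1 by omega]
  push_cast
  ring

theorem sum_rhat (hR : ∀ i ∈ R, 1 ≤ i) (hRdc : ∀ i ∈ R, i ≤ dc) (hdc : 1 ≤ dc)
    (hrhoSum : ∑ i ∈ R, rho i = 1) :
    ∑ j ∈ Finset.Icc 1 dc, rhat L R lam rho ε j y = eF L lam ε y := by
  set x := xF L lam ε y
  have hinner : ∀ i ∈ R, ∑ j ∈ Finset.Ioc 1 dc, ((i - 1).choose (j - 1) : ℝ) * x ^ j *
      (1 - x) ^ (i - j) = x - x * (1 - x) ^ (i - 1) := by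
    intro i hi
    have h := sum_Icc_choose_mul_pow x (hR i hi) (hRdc i hi)
    rw [← Finset.sum_Ioc_add_eq_sum_Icc hdc] at h
    simp only [Nat.sub_self, Nat.choose_zero_right, Nat.cast_one, one_mul, pow_one] at h
    linarith
  have htail : ∑ j ∈ Finset.Ioc 1 dc, rhat L R lam rho ε j y = x - x * rhoP R rho (1 - x) := by
    calc _ = ∑ i ∈ R, rho i * ∑ j ∈ Finset.Ioc 1 dc, ((i - 1).choose (j - 1) : ℝ) * x ^ j *
          (1 - x) ^ (i - j) := by
          rw [Finset.sum_congr rfl fun j hj => rhat_of_ne_one (by simp at hj; omega),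
            Finset.sum_comm]
          simp only [Finset.mul_sum, mul_assoc]
          rfl
      _ = x - x * rhoP R rho (1 - x) := by
          have hsplit : ∑ i ∈ R, rho i * (x - x * (1 - x) ^ (i - 1))
              = x * ∑ i ∈ R, rho i - x * ∑ i ∈ R, rho i * (1 - x) ^ (i - 1) := by
            rw [Finset.mul_sum, Finset.mul_sum, ← Finset.sum_sub_distrib]
            exact Finset.sum_congr rfl fun i _ => by ring
          rw [Finset.sum_congr rfl fun i hi => congrArg (rho i * ·) (hinner i hi), hsplit,
            hrhoSum, mul_one, rhoP]
  rw [← Finset.sum_Ioc_add_eq_sum_Icc hdc, htail, rhat, if_pos rfl, eF]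
  ring

theorem Gf_eq (hRdc : ∀ i ∈ R, i ≤ dc) {j : ℕ} (hj : 1 ≤ j) (hjdc : j ≤ dc) :
    Gf L R lam rho ε dc j y
      = j * (rhat L R lam rho ε (j + 1) y - rhat L R lam rho ε j y) / xF L lam ε y := by
  rw [Gf]
  split_ifs with h
  · subst h
    rw [rhat_eq_zero (by omega) fun i hi => Nat.lt_succ_of_le (hRdc i hi)]
    ring
  · rfl

theorem sum_Gf (hR : ∀ i ∈ R, 1 ≤ i) (hRdc : ∀ i ∈ R, i ≤ dc) (hdc : 1 ≤ dc)
    (hrhoSum : ∑ i ∈ R, rho i = 1) (hx : xF L lam ε y ≠ 0) :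
    ∑ j ∈ Finset.Icc 1 (dc - 1), Gf L R lam rho ε dc j y = -y - Gf L R lam rho ε dc dc y := by
  have htele := sum_Icc_mul_sub (fun j => rhat L R lam rho ε j y) (dc - 1)
  rw [Nat.sub_add_cancel hdc, sum_rhat hR hRdc hdc hrhoSum, eF] at htele
  rw [Finset.sum_congr rfl fun j hj => Gf_eq hRdc (Finset.mem_Icc.1 hj).1
    (by have := (Finset.mem_Icc.1 hj).2; omega), ← Finset.sum_div, htele, Gf_eq hRdc hdc le_rfl,
    rhat_eq_zero (by omega) fun i hi => Nat.lt_succ_of_le (hRdc i hi)]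
  push_cast [Nat.cast_sub hdc]
  field_simp
  ring

theorem hasDerivAt_rhat (hL : ∀ k ∈ L, 1 ≤ k) (hR : ∀ i ∈ R, 1 ≤ i) {j : ℕ} (hj : 1 ≤ j)
    (hx : xF L lam ε y ≠ 0) :
    HasDerivAt (rhat L R lam rho ε j)
      (j * (xD L lam ε y / xF L lam ε y) * (rhat L R lam rho ε j y - rhat L R lam rho ε (j + 1) y)
        + if j = 1 then xF L lam ε y else 0) y := by
  have hxF : HasDerivAt (xF L lam ε) (xD L lam ε y) y := hasDerivAt_xF hL
  obtain rfl | hj2 := hj.eq_or_lt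
  · have hfun : rhat L R lam rho ε 1
        = fun y => xF L lam ε y * (y - 1 + rhoP R rho (1 - xF L lam ε y)) :=
      funext fun _ => if_pos rfl
    rw [hfun, rhat_two hR, if_pos rfl]
    refine (hxF.mul (((hasDerivAt_id y).sub_const 1).add
      ((hasDerivAt_rhoP hR).comp y (hxF.const_sub 1)))).congr_deriv ?_
    simp only [Pi.add_apply, Function.comp_apply, id_eq]
    field_simp
    ring
  · rw [rhat_of_ne_one hj2.ne', rhat_of_ne_one (by omega : j + 1 ≠ 1), if_neg hj2.ne', add_zero,
      ← Finset.sum_sub_distrib, Finset.mul_sum]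
    have hfun : rhat L R lam rho ε j = fun t => ∑ i ∈ R, rho i * ((i - 1).choose (j - 1) : ℝ) *
        xF L lam ε t ^ j * (1 - xF L lam ε t) ^ (i - j) :=
      funext fun _ => rhat_of_ne_one hj2.ne'
    rw [hfun]
    refine (HasDerivAt.fun_sum fun i _ => ((hxF.fun_pow j).const_mul
      (rho i * ((i - 1).choose (j - 1) : ℝ))).fun_mul ((hxF.const_sub 1).fun_pow (i - j)))
      |>.congr_deriv (Finset.sum_congr rfl fun i _ => ?_)
    have hchoose :
        ((i - j : ℕ) : ℝ) * ((i - 1).choose (j - 1) : ℝ) = j * ((i - 1).choose j : ℝ) := by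
      have h := Nat.choose_succ_right_eq (i - 1) (j - 1)
      rw [Nat.sub_add_cancel hj, show i - 1 - (j - 1) = i - j by omega] at h
      exact_mod_cast (by linarith [h] : (i - j) * (i - 1).choose (j - 1) = j * (i - 1).choose j)
    rw [Nat.add_sub_cancel, show i - (j + 1) = i - j - 1 by omega, pow_succ]
    field_simp
    rw [← pow_sub_mul_pow (xF L lam ε y) hj]
    linear_combination (-(rho i) * xF L lam ε y ^ (j - 1) * xF L lam ε y ^ 2 *
      (1 - xF L lam ε y) ^ (i - j - 1) * xD L lam ε y) * hchoose

theorem hasDerivAt_Gf (hL : ∀ k ∈ L, 1 ≤ k) (hR : ∀ i ∈ R, 1 ≤ i) (hRdc : ∀ i ∈ R, i ≤ dc)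
    {j : ℕ} (hj : 1 ≤ j) (hjdc : j < dc) (hx : xF L lam ε y ≠ 0) :
    HasDerivAt (Gf L R lam rho ε dc j)
      (-(xD L lam ε y / xF L lam ε y) *
          (j * (Gf L R lam rho ε dc (j + 1) y - Gf L R lam rho ε dc j y) + Gf L R lam rho ε dc j y)
        - if j = 1 then 1 else 0) y := by
  have hfun : Gf L R lam rho ε dc j = fun t =>
      j * (rhat L R lam rho ε (j + 1) t - rhat L R lam rho ε j t) / xF L lam ε t :=
    funext fun _ => Gf_eq hRdc hj hjdc.le
  rw [Gf_eq hRdc hj hjdc.le, Gf_eq hRdc (by omega) hjdc, hfun]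
  refine ((((hasDerivAt_rhat hL hR (by omega : 1 ≤ j + 1) hx).sub
    (hasDerivAt_rhat hL hR hj hx)).const_mul (j : ℝ)).div (hasDerivAt_xF hL) hx).congr_deriv ?_
  rw [if_neg (by omega : j + 1 ≠ 1), Pi.sub_apply]
  split_ifs with h1
  · subst h1
    field_simp
    ring
  · push_cast
    field_simp
    ring

end CheckNodes

-- `CEvv` says that `δll k s` has derivative `vvRhs L lam ε (fun a b => δll a b y) k s y`.
noncomputable def vvRhs (L : Finset ℕ) (lam : ℕ → ℝ) (ε : ℝ) (δ : ℕ → ℕ → ℝ) (k s : ℕ) (y : ℝ) :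
    ℝ :=
  -(xF L lam ε y) *
      (((s : ℝ) * lhat lam ε s y / eF L lam ε y ^ 2) * ∑ t ∈ L, δ k t
        + ((k : ℝ) * lhat lam ε k y / eF L lam ε y ^ 2) * ∑ t ∈ L, δ s t
        - (((k : ℝ) + (s : ℝ)) / eF L lam ε y) * δ k s)
    - xF L lam ε y * (k : ℝ) * (s : ℝ) * (lhat lam ε k y / eF L lam ε y) *
        ((if k = s then (1 : ℝ) else 0) - lhat lam ε s y / eF L lam ε y)

noncomputable def vvSol (L : Finset ℕ) (lam : ℕ → ℝ) (ε : ℝ) (k s : ℕ) (y : ℝ) : ℝ :=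
  (if k = s then (1 : ℝ) else 0) * k * lhat lam ε k y * (1 - ε * y ^ k)
    - k * lhat lam ε k y * (s * lhat lam ε s y) / eF L lam ε y ^ 2 * Ff L lam ε y
    + k * lhat lam ε k y / eF L lam ε y * (ε * lhat lam ε s y * (y ^ s - 1))
    + s * lhat lam ε s y / eF L lam ε y * (ε * lhat lam ε k y * (y ^ k - 1))

section VariableBlock

variable {L : Finset ℕ} {lam : ℕ → ℝ} {ε y : ℝ}

theorem sum_vvSol (hL : ∀ k ∈ L, 1 ≤ k) {k : ℕ} (hk : k ∈ L) :
    ∑ t ∈ L, vvSol L lam ε k t y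
      = k * lhat lam ε k y * (1 - ε * y ^ k)
        - k * lhat lam ε k y / eF L lam ε y ^ 2 * Ff L lam ε y * ∑ t ∈ L, (t : ℝ) * lhat lam ε t y
        + k * lhat lam ε k y / eF L lam ε y * ε *
            (∑ t ∈ L, lhat lam ε t y * y ^ t - eF L lam ε y)
        + ε * lhat lam ε k y * (y ^ k - 1) / eF L lam ε y * ∑ t ∈ L, (t : ℝ) * lhat lam ε t y := by
  have hsummand : ∀ t, vvSol L lam ε k t y
      = (if k = t then k * lhat lam ε k y * (1 - ε * y ^ k) else 0)
        + (ε * lhat lam ε k y * (y ^ k - 1) / eF L lam ε y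
            - k * lhat lam ε k y / eF L lam ε y ^ 2 * Ff L lam ε y) * (t * lhat lam ε t y)
        + k * lhat lam ε k y / eF L lam ε y * ε * (lhat lam ε t y * y ^ t - lhat lam ε t y) := by
    intro t
    rw [vvSol]
    split_ifs <;> ring
  simp only [hsummand, Finset.sum_add_distrib, ← Finset.mul_sum, Finset.sum_ite_eq, if_pos hk,
    Finset.sum_sub_distrib, sum_lhat hL]
  ring

theorem sum_mul_vvSol {k : ℕ} (hk : k ∈ L) :
    ∑ t ∈ L, (t : ℝ) * vvSol L lam ε k t y
      = k ^ 2 * lhat lam ε k y * (1 - ε * y ^ k)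
        - k * lhat lam ε k y / eF L lam ε y ^ 2 * Ff L lam ε y *
            ∑ t ∈ L, (t : ℝ) ^ 2 * lhat lam ε t y
        + k * lhat lam ε k y / eF L lam ε y * ε *
            (∑ t ∈ L, t * lhat lam ε t y * y ^ t - ∑ t ∈ L, (t : ℝ) * lhat lam ε t y)
        + ε * lhat lam ε k y * (y ^ k - 1) / eF L lam ε y *
            ∑ t ∈ L, (t : ℝ) ^ 2 * lhat lam ε t y := by
  have hsummand : ∀ t : ℕ, (t : ℝ) * vvSol L lam ε k t y
      = (if k = t then k ^ 2 * lhat lam ε k y * (1 - ε * y ^ k) else 0)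
        + (ε * lhat lam ε k y * (y ^ k - 1) / eF L lam ε y
            - k * lhat lam ε k y / eF L lam ε y ^ 2 * Ff L lam ε y) * (t ^ 2 * lhat lam ε t y)
        + k * lhat lam ε k y / eF L lam ε y * ε *
            (t * lhat lam ε t y * y ^ t - t * lhat lam ε t y) := by
    intro t
    rw [vvSol]
    split_ifs with h
    · subst h
      ring
    · ring
  simp only [hsummand, Finset.sum_add_distrib, ← Finset.mul_sum, Finset.sum_ite_eq, if_pos hk,
    Finset.sum_sub_distrib]
  ring

theorem hasDerivAt_vvSol (hL : ∀ k ∈ L, 2 ≤ k) {k s : ℕ} (hk : k ∈ L) (hs : s ∈ L)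
    (hy : y ≠ 0) (hx : xF L lam ε y ≠ 0) :
    HasDerivAt (vvSol L lam ε k s) (vvRhs L lam ε (fun a b => vvSol L lam ε a b y) k s y) y := by
  have hL1 : ∀ k ∈ L, 1 ≤ k := fun k hk => one_le_two.trans (hL k hk)
  have he0 : eF L lam ε y ≠ 0 := mul_ne_zero hx hy
  have he : HasDerivAt (eF L lam ε) (xD L lam ε y * y + xF L lam ε y * 1) y :=
    (hasDerivAt_xF hL1).mul (hasDerivAt_id y)
  have hlk := hasDerivAt_lhat (lam := lam) (ε := ε) k hy
  have hls := hasDerivAt_lhat (lam := lam) (ε := ε) s hy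
  have hpk := hasDerivAt_pow_of_ne_zero k hy
  have hps := hasDerivAt_pow_of_ne_zero s hy
  have hφk := (hlk.const_mul (k : ℝ)).fun_div he he0
  have hφs := (hls.const_mul (s : ℝ)).fun_div he he0
  have hF := hasDerivAt_Ff (lam := lam) (ε := ε) (y := y) hL1
  have hdiag := (hlk.const_mul ((if k = s then (1 : ℝ) else 0) * k)).fun_mul
    ((hpk.const_mul ε).const_sub 1)
  have hcross := (((hlk.const_mul (k : ℝ)).fun_mul (hls.const_mul (s : ℝ))).fun_div
    (he.fun_pow 2) (pow_ne_zero 2 he0)).fun_mul hF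
  refine (((hdiag.fun_sub hcross).fun_add (hφk.fun_mul ((hls.const_mul ε).fun_mul
    (hps.sub_const 1)))).fun_add (hφs.fun_mul ((hlk.const_mul ε).fun_mul
    (hpk.sub_const 1)))).congr_deriv ?_
  rw [vvRhs, sum_vvSol hL1 hk, sum_vvSol hL1 hs, sum_mul_lhat hL,
    Fd_eq_sum_lhat_mul_pow hL1 hy]
  simp only [vvSol, eF] at he0 ⊢
  split_ifs with hks
  · subst hks
    field_simp
    ring
  · field_simp
    ring

theorem vvSol_one (hlamSum : ∑ k ∈ L, lam k = 1) (hε : ε ≠ 0) (k s : ℕ) :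
    vvSol L lam ε k s 1 = (if k = s then 1 else 0) * k * lam k * ε * (1 - ε) := by
  simp only [vvSol, lhat, eF, xF_one hlamSum, Ff_one, one_pow]
  field_simp
  ring

theorem abs_vvRhs_sub_vvRhs_le (hL : ∀ k ∈ L, 1 ≤ k) (hlamPos : ∀ k ∈ L, 0 < lam k)
    (hε : 0 < ε) {a : ℝ} (ha : 0 < a) (hay : a ≤ y) {k s : ℕ} (hk : k ∈ L) (hs : s ∈ L)
    (δ δ' : ℕ → ℕ → ℝ) :
    |vvRhs L lam ε δ k s y - vvRhs L lam ε δ' k s y|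
      ≤ 2 * (k + s) / a * ∑ p ∈ L ×ˢ L, |δ p.1 p.2 - δ' p.1 p.2| := by
  have hy : 0 < y := ha.trans_le hay
  have hx : 0 < xF L lam ε y := xF_pos ⟨k, hk⟩ hlamPos hε hy
  have hcoef (t : ℕ) (ht : t ∈ L) := mul_lhat_div_eF_div_mem_Icc hL hlamPos hε ha hay ht
  have hdiff : vvRhs L lam ε δ k s y - vvRhs L lam ε δ' k s y
      = -(s * (lhat lam ε s y / eF L lam ε y) / y * ∑ t ∈ L, (δ k t - δ' k t))
        - k * (lhat lam ε k y / eF L lam ε y) / y * ∑ t ∈ L, (δ s t - δ' s t)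
        + (k + s) / y * (δ k s - δ' k s) := by
    simp only [vvRhs, Finset.sum_sub_distrib, eF]
    field_simp
    ring
  set N := ∑ p ∈ L ×ˢ L, |δ p.1 p.2 - δ' p.1 p.2|
  have hks : (k + s) / y ≤ (k + s) / a := by gcongr
  calc _ ≤ s / a * N + k / a * N + (k + s) / a * N := by
        rw [hdiff]
        refine (abs_add_le _ _).trans (add_le_add ((abs_sub _ _).trans (add_le_add ?_ ?_)) ?_)
        · rw [abs_neg]
          exact abs_mul_le_mul_of_le (hcoef s hs).1 (hcoef s hs).2
            (abs_sum_row_le_sum_abs_product (fun a b => δ a b - δ' a b) hk)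
        · exact abs_mul_le_mul_of_le (hcoef k hk).1 (hcoef k hk).2
            (abs_sum_row_le_sum_abs_product (fun a b => δ a b - δ' a b) hs)
        · exact abs_mul_le_mul_of_le (by positivity) hks
            (abs_le_sum_abs_product (fun a b => δ a b - δ' a b) hk hs)
    _ = _ := by ring

theorem eq_vvSol_of_CEvv (hL : ∀ k ∈ L, 2 ≤ k) (hlamPos : ∀ k ∈ L, 0 < lam k)
    (hlamSum : ∑ k ∈ L, lam k = 1) (hε : 0 < ε) {δll : ℕ → ℕ → ℝ → ℝ}
    (hvv : CEvv L lam ε δll) :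
    ∀ k ∈ L, ∀ s ∈ L, ∀ y ∈ Set.Ioc (0 : ℝ) 1, δll k s y = vvSol L lam ε k s y := by
  have hL1 : ∀ k ∈ L, 1 ≤ k := fun k hk => one_le_two.trans (hL k hk)
  intro k hk s hs y hy
  -- The coefficients grow like `1 / t` as `t → 0`, so the comparison runs on `(y / 2, 1]`.
  have hsub : Set.Ioc (y / 2) 1 ⊆ Set.Ioc 0 1 := Set.Ioc_subset_Ioc_left (by linarith [hy.1])
  have hδ : ∀ p ∈ L ×ˢ L, ∀ t ∈ Set.Ioc (y / 2) 1, HasDerivWithinAt (δll p.1 p.2)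
      (vvRhs L lam ε (fun a b => δll a b t) p.1 p.2 t) (Set.Ioc (y / 2) 1) t := fun p hp t ht =>
    (hvv.1 p.1 (Finset.mem_product.1 hp).1 p.2 (Finset.mem_product.1 hp).2 t (hsub ht)).mono hsub
  have hsol : ∀ p ∈ L ×ˢ L, ∀ t ∈ Set.Ioc (y / 2) 1, HasDerivWithinAt (vvSol L lam ε p.1 p.2)
      (vvRhs L lam ε (fun a b => vvSol L lam ε a b t) p.1 p.2 t) (Set.Ioc (y / 2) 1) t :=
    fun p hp t ht => (hasDerivAt_vvSol hL (Finset.mem_product.1 hp).1 (Finset.mem_product.1 hp).2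
      (hsub ht).1.ne' (xF_pos ⟨k, hk⟩ hlamPos hε (hsub ht).1).ne').hasDerivWithinAt
  have hbound : ∀ p ∈ L ×ˢ L, ∀ t ∈ Set.Ioc (y / 2) 1,
      |vvRhs L lam ε (fun a b => δll a b t) p.1 p.2 t
        - vvRhs L lam ε (fun a b => vvSol L lam ε a b t) p.1 p.2 t|
      ≤ 2 * (p.1 + p.2) / (y / 2) * ∑ q ∈ L ×ˢ L, |δll q.1 q.2 t - vvSol L lam ε q.1 q.2 t| :=
    fun p hp t ht => abs_vvRhs_sub_vvRhs_le hL1 hlamPos hε (half_pos hy.1) ht.1.le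
      (Finset.mem_product.1 hp).1 (Finset.mem_product.1 hp).2 _ _
  have hone : ∀ p ∈ L ×ˢ L, δll p.1 p.2 1 = vvSol L lam ε p.1 p.2 1 := fun p hp => by
    rw [hvv.2 p.1 (Finset.mem_product.1 hp).1 p.2 (Finset.mem_product.1 hp).2,
      vvSol_one hlamSum hε.ne']
  exact eqOn_Ioc_of_abs_deriv_sub_le (L ×ˢ L) hδ hsol hbound hone (k, s)
    (Finset.mem_product.2 ⟨hk, hs⟩) y ⟨half_lt_self hy.1, hy.2⟩

end VariableBlock

-- `δ^{l_k,r_{j+1}}`, read through the closure `δ^{l_k,r_{d_c}} = δ^{l_k,l_Σ} - Σ_j δ^{l_k,r_j}`.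
noncomputable def vcNext (L : Finset ℕ) (dc : ℕ) (δv δc : ℕ → ℕ → ℝ) (k j : ℕ) : ℝ :=
  if j + 1 = dc then (∑ t ∈ L, δv k t) - ∑ j' ∈ Finset.Icc 1 (dc - 1), δc k j' else δc k (j + 1)

-- `CEvc` says that `δlr k j` has derivative
-- `vcRhs L R lam rho ε dc (fun a b => δll a b y) (fun a b => δlr a b y) k j y`.
noncomputable def vcRhs (L R : Finset ℕ) (lam rho : ℕ → ℝ) (ε : ℝ) (dc : ℕ)
    (δv δc : ℕ → ℕ → ℝ) (k j : ℕ) (y : ℝ) : ℝ :=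
  2 * (xD L lam ε y / eF L lam ε y) * Gf L R lam rho ε dc j y * ∑ t ∈ L, δv k t
    - (Gf L R lam rho ε dc j y / y ^ 2) * ∑ i ∈ L, ((i : ℝ) - 1) * δv k i
    - xF L lam ε y * (aF L lam ε y - (k : ℝ)) * ((k : ℝ) * lhat lam ε k y / eF L lam ε y)
        * (Gf L R lam rho ε dc j y / y)
    - ((k : ℝ) * lhat lam ε k y / (eF L lam ε y * y)) * ∑ t ∈ L, δc t j
    + ((k : ℝ) / y) * δc k j
    - (j : ℝ) * (xD L lam ε y / xF L lam ε y) * (vcNext L dc δv δc k j - δc k j)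

noncomputable def vcSol (L R : Finset ℕ) (lam rho : ℕ → ℝ) (ε : ℝ) (dc : ℕ) (s j : ℕ) (y : ℝ) :
    ℝ :=
  (Ff L lam ε y * ((s : ℝ) * lhat lam ε s y / eF L lam ε y) - ε * lhat lam ε s y * (y ^ s - 1)) *
      ((xD L lam ε y / xF L lam ε y) * Gf L R lam rho ε dc j y - (if j = 1 then (1 : ℝ) else 0))
    - ((s : ℝ) * lhat lam ε s y / eF L lam ε y) * Gf L R lam rho ε dc j y *
        ((Fd L lam ε y + xF L lam ε y) / 2 - ε * xF L lam ε y * y ^ s)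

section CheckBlock

variable {L R : Finset ℕ} {lam rho : ℕ → ℝ} {ε y : ℝ} {dc : ℕ}

theorem sum_vcSol (hL : ∀ k ∈ L, 1 ≤ k) (j : ℕ) :
    ∑ t ∈ L, vcSol L R lam rho ε dc t j y
      = (Ff L lam ε y / eF L lam ε y * ∑ t ∈ L, (t : ℝ) * lhat lam ε t y
          - ε * (∑ t ∈ L, lhat lam ε t y * y ^ t - eF L lam ε y)) *
          ((xD L lam ε y / xF L lam ε y) * Gf L R lam rho ε dc j y - (if j = 1 then 1 else 0))
        - (∑ t ∈ L, (t : ℝ) * lhat lam ε t y) / eF L lam ε y * Gf L R lam rho ε dc j y *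
            ((Fd L lam ε y + xF L lam ε y) / 2)
        + Gf L R lam rho ε dc j y * ε * xF L lam ε y / eF L lam ε y *
            ∑ t ∈ L, (t : ℝ) * lhat lam ε t y * y ^ t := by
  set c := (xD L lam ε y / xF L lam ε y) * Gf L R lam rho ε dc j y
    - (if j = 1 then (1 : ℝ) else 0)
  have hsummand : ∀ t : ℕ, vcSol L R lam rho ε dc t j y
      = (Ff L lam ε y / eF L lam ε y * c
          - Gf L R lam rho ε dc j y * ((Fd L lam ε y + xF L lam ε y) / 2) / eF L lam ε y)
          * (t * lhat lam ε t y)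
        - ε * c * (lhat lam ε t y * y ^ t - lhat lam ε t y)
        + Gf L R lam rho ε dc j y * ε * xF L lam ε y / eF L lam ε y
          * (t * lhat lam ε t y * y ^ t) := by
    intro t
    rw [vcSol]
    ring
  simp only [hsummand, Finset.sum_add_distrib, Finset.sum_sub_distrib, ← Finset.mul_sum,
    sum_lhat hL]
  ring

theorem sum_vvSol_sub_sum_vcSol (hL : ∀ k ∈ L, 2 ≤ k) (hR : ∀ i ∈ R, 1 ≤ i)
    (hRdc : ∀ i ∈ R, i ≤ dc) (hdc : 2 ≤ dc) (hrhoSum : ∑ i ∈ R, rho i = 1) {k : ℕ} (hk : k ∈ L)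
    (hy : y ≠ 0) (hx : xF L lam ε y ≠ 0) :
    ∑ t ∈ L, vvSol L lam ε k t y - ∑ j ∈ Finset.Icc 1 (dc - 1), vcSol L R lam rho ε dc k j y
      = vcSol L R lam rho ε dc k dc y := by
  have hL1 : ∀ k ∈ L, 1 ≤ k := fun k hk => one_le_two.trans (hL k hk)
  have hone : ∑ j ∈ Finset.Icc 1 (dc - 1), (if j = 1 then (1 : ℝ) else 0) = 1 := by
    rw [Finset.sum_ite_eq', if_pos (by simp only [Finset.mem_Icc]; omega)]
  have hsummand : ∀ j, vcSol L R lam rho ε dc k j y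
      = ((Ff L lam ε y * (k * lhat lam ε k y / eF L lam ε y) - ε * lhat lam ε k y * (y ^ k - 1))
            * (xD L lam ε y / xF L lam ε y)
          - k * lhat lam ε k y / eF L lam ε y *
            ((Fd L lam ε y + xF L lam ε y) / 2 - ε * xF L lam ε y * y ^ k))
          * Gf L R lam rho ε dc j y
        - (Ff L lam ε y * (k * lhat lam ε k y / eF L lam ε y) - ε * lhat lam ε k y * (y ^ k - 1))
          * (if j = 1 then 1 else 0) := by
    intro j
    rw [vcSol]
    ring
  simp only [hsummand, Finset.sum_sub_distrib, ← Finset.mul_sum, hone,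
    sum_Gf hR hRdc (by omega) hrhoSum hx, sum_vvSol hL1 hk, if_neg (show dc ≠ 1 by omega)]
  rw [Fd_eq_sum_lhat_mul_pow hL1 hy, sum_mul_lhat hL]
  simp only [eF]
  field_simp
  ring

theorem vcNext_vcSol (hL : ∀ k ∈ L, 2 ≤ k) (hR : ∀ i ∈ R, 1 ≤ i) (hRdc : ∀ i ∈ R, i ≤ dc)
    (hrhoSum : ∑ i ∈ R, rho i = 1) {k j : ℕ} (hk : k ∈ L) (hj : 1 ≤ j) (hy : y ≠ 0)
    (hx : xF L lam ε y ≠ 0) :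
    vcNext L dc (fun a b => vvSol L lam ε a b y) (fun a b => vcSol L R lam rho ε dc a b y) k j
      = vcSol L R lam rho ε dc k (j + 1) y := by
  rw [vcNext]
  split_ifs with hclose
  · rw [hclose]
    exact sum_vvSol_sub_sum_vcSol hL hR hRdc (by omega) hrhoSum hk hy hx
  · rfl

theorem hasDerivAt_vcSol (hL : ∀ k ∈ L, 2 ≤ k) (hR : ∀ i ∈ R, 1 ≤ i) (hRdc : ∀ i ∈ R, i ≤ dc)
    (hrhoSum : ∑ i ∈ R, rho i = 1) {k j : ℕ} (hk : k ∈ L) (hj : 1 ≤ j) (hjdc : j < dc)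
    (hy : y ≠ 0) (hx : xF L lam ε y ≠ 0) :
    HasDerivAt (vcSol L R lam rho ε dc k j)
      (vcRhs L R lam rho ε dc (fun a b => vvSol L lam ε a b y)
        (fun a b => vcSol L R lam rho ε dc a b y) k j y) y := by
  have hL1 : ∀ k ∈ L, 1 ≤ k := fun k hk => one_le_two.trans (hL k hk)
  have he0 : eF L lam ε y ≠ 0 := mul_ne_zero hx hy
  have hxF : HasDerivAt (xF L lam ε) (xD L lam ε y) y := hasDerivAt_xF hL1
  have he : HasDerivAt (eF L lam ε) (xD L lam ε y * y + xF L lam ε y * 1) y :=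
    hxF.mul (hasDerivAt_id y)
  have hlk := hasDerivAt_lhat (lam := lam) (ε := ε) k hy
  have hpk := hasDerivAt_pow_of_ne_zero k hy
  have hφ := (hlk.const_mul (k : ℝ)).fun_div he he0
  have hG := hasDerivAt_Gf (rho := rho) hL1 hR hRdc hj hjdc hx
  have hF := hasDerivAt_Ff (lam := lam) (ε := ε) (y := y) hL1
  have hFd := hasDerivAt_Fd (lam := lam) (ε := ε) hL1 hy
  have hA := (hF.fun_mul hφ).fun_sub ((hlk.const_mul ε).fun_mul (hpk.sub_const 1))
  have hxD := hasDerivAt_xD (lam := lam) (ε := ε) (y := y) hL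
  have hB := ((hxD.fun_div hxF hx).fun_mul hG).sub_const (if j = 1 then 1 else 0)
  have hC := (hφ.fun_mul hG).fun_mul (((hFd.fun_add hxF).div_const 2).fun_sub
    ((hxF.const_mul ε).fun_mul hpk))
  refine ((hA.fun_mul hB).fun_sub hC).congr_deriv ?_
  rw [vcRhs, vcNext_vcSol hL hR hRdc hrhoSum hk hj hy hx]
  simp only [sub_mul, one_mul, Finset.sum_sub_distrib]
  rw [sum_mul_vvSol hk, sum_vvSol hL1 hk, sum_vcSol hL1]
  simp only [vcSol, if_neg (show j + 1 ≠ 1 by omega)]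
  rw [sum_mul_lhat hL, sum_sq_mul_lhat hL, Fd_eq_sum_lhat_mul_pow hL1 hy]
  simp only [aF, eF] at he0 ⊢
  split_ifs with hj1
  · subst hj1
    field_simp
    ring
  · field_simp
    ring

theorem vcSol_one (hlamSum : ∑ k ∈ L, lam k = 1) (hε : ε ≠ 0) (k j : ℕ) :
    vcSol L R lam rho ε dc k j 1 = -(k * lam k * ε * (1 - ε)) * Gf L R lam rho ε dc j 1 := by
  simp only [vcSol, lhat, eF, xF_one hlamSum, Ff_one, Fd_one hlamSum, one_pow]
  field_simp
  ring

theorem abs_vcNext_sub_vcNext_le {k j : ℕ} (hk : k ∈ L) (hj : j ∈ Finset.Icc 1 (dc - 1))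
    {δv δv' δc δc' : ℕ → ℕ → ℝ} (hv : ∀ t ∈ L, δv k t = δv' k t) :
    |vcNext L dc δv δc k j - vcNext L dc δv' δc' k j|
      ≤ ∑ p ∈ L ×ˢ Finset.Icc 1 (dc - 1), |δc p.1 p.2 - δc' p.1 p.2| := by
  rw [vcNext, vcNext]
  split_ifs with h
  · rw [Finset.sum_congr rfl hv, sub_sub_sub_cancel_left, abs_sub_comm, ← Finset.sum_sub_distrib]
    exact abs_sum_row_le_sum_abs_product (fun a b => δc a b - δc' a b) hk
  · have hj1 : j + 1 ∈ Finset.Icc 1 (dc - 1) := by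
      simp only [Finset.mem_Icc] at hj ⊢
      omega
    exact abs_le_sum_abs_product (fun a b => δc a b - δc' a b) hk hj1

theorem abs_vcRhs_sub_vcRhs_le (hL : ∀ k ∈ L, 1 ≤ k) (hlamPos : ∀ k ∈ L, 0 < lam k)
    (hε : 0 < ε) {a C : ℝ} (ha : 0 < a) (hay : a ≤ y)
    (hC : |xD L lam ε y / xF L lam ε y| ≤ C) {k j : ℕ} (hk : k ∈ L)
    (hj : j ∈ Finset.Icc 1 (dc - 1)) {δv δv' δc δc' : ℕ → ℕ → ℝ}
    (hv : ∀ t ∈ L, δv k t = δv' k t) :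
    |vcRhs L R lam rho ε dc δv δc k j y - vcRhs L R lam rho ε dc δv' δc' k j y|
      ≤ (2 * k / a + 2 * j * C)
        * ∑ p ∈ L ×ˢ Finset.Icc 1 (dc - 1), |δc p.1 p.2 - δc' p.1 p.2| := by
  have hy : 0 < y := ha.trans_le hay
  have hx : 0 < xF L lam ε y := xF_pos ⟨k, hk⟩ hlamPos hε hy
  set N := ∑ p ∈ L ×ˢ Finset.Icc 1 (dc - 1), |δc p.1 p.2 - δc' p.1 p.2|
  have hdiff : vcRhs L R lam rho ε dc δv δc k j y - vcRhs L R lam rho ε dc δv' δc' k j y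
      = -(k * (lhat lam ε k y / eF L lam ε y) / y * ∑ t ∈ L, (δc t j - δc' t j))
        + k / y * (δc k j - δc' k j)
        - j * (xD L lam ε y / xF L lam ε y) * ((vcNext L dc δv δc k j - vcNext L dc δv' δc' k j)
          - (δc k j - δc' k j)) := by
    rw [vcRhs, vcRhs, Finset.sum_congr rfl hv,
      Finset.sum_congr rfl fun (t : ℕ) ht => congrArg (((t : ℝ) - 1) * ·) (hv t ht),
      Finset.sum_sub_distrib, eF]
    field_simp
    ring
  have hcoef := mul_lhat_div_eF_div_mem_Icc hL hlamPos hε ha hay hk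
  have hjC : |j * (xD L lam ε y / xF L lam ε y)| ≤ j * C := by
    rw [abs_mul, Nat.abs_cast]
    gcongr
  have hentry := abs_le_sum_abs_product (fun a b => δc a b - δc' a b) hk hj
  calc _ ≤ k / a * N + k / a * N + j * C * (N + N) := by
        rw [hdiff]
        refine (abs_sub _ _).trans (add_le_add ((abs_add_le _ _).trans (add_le_add ?_ ?_)) ?_)
        · rw [abs_neg]
          exact abs_mul_le_mul_of_le hcoef.1 hcoef.2
            (abs_sum_col_le_sum_abs_product (fun a b => δc a b - δc' a b) hj)
        · exact abs_mul_le_mul_of_le (by positivity) (by gcongr) hentry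
        · rw [abs_mul]
          exact mul_le_mul hjC ((abs_sub _ _).trans
            (add_le_add (abs_vcNext_sub_vcNext_le hk hj hv) hentry)) (abs_nonneg _)
            ((abs_nonneg _).trans hjC)
    _ = _ := by ring

theorem eq_vcSol_of_CEvc (hL : ∀ k ∈ L, 2 ≤ k) (hR : ∀ i ∈ R, 1 ≤ i) (hRdc : ∀ i ∈ R, i ≤ dc)
    (hlamPos : ∀ k ∈ L, 0 < lam k) (hlamSum : ∑ k ∈ L, lam k = 1)
    (hrhoSum : ∑ i ∈ R, rho i = 1) (hε : 0 < ε) {δll δlr : ℕ → ℕ → ℝ → ℝ}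
    (hvv : CEvv L lam ε δll) (hvc : CEvc L R lam rho ε dc δll δlr) :
    ∀ k ∈ L, ∀ j ∈ Finset.Icc 1 (dc - 1), ∀ y ∈ Set.Ioc (0 : ℝ) 1,
      δlr k j y = vcSol L R lam rho ε dc k j y := by
  have hL1 : ∀ k ∈ L, 1 ≤ k := fun k hk => one_le_two.trans (hL k hk)
  set S := L ×ˢ Finset.Icc 1 (dc - 1)
  have hmem : ∀ p ∈ S, p.1 ∈ L ∧ 1 ≤ p.2 ∧ p.2 < dc := fun p hp => by
    obtain ⟨h1, h2⟩ := Finset.mem_product.1 hp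
    rw [Finset.mem_Icc] at h2
    exact ⟨h1, h2.1, by omega⟩
  intro k hk j hj y hy
  have hsub : Set.Ioc (y / 2) 1 ⊆ Set.Ioc 0 1 := Set.Ioc_subset_Ioc_left (by linarith [hy.1])
  obtain ⟨C, hC⟩ := exists_abs_xD_div_xF_le hL ⟨k, hk⟩ hlamPos hε (half_pos hy.1) (b := 1)
  have hδ : ∀ p ∈ S, ∀ t ∈ Set.Ioc (y / 2) 1, HasDerivWithinAt (δlr p.1 p.2)
      (vcRhs L R lam rho ε dc (fun a b => δll a b t) (fun a b => δlr a b t) p.1 p.2 t)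
      (Set.Ioc (y / 2) 1) t := fun p hp t ht =>
    (hvc.1 p.1 (Finset.mem_product.1 hp).1 p.2 (Finset.mem_product.1 hp).2 t (hsub ht)).mono hsub
  have hsol : ∀ p ∈ S, ∀ t ∈ Set.Ioc (y / 2) 1, HasDerivWithinAt (vcSol L R lam rho ε dc p.1 p.2)
      (vcRhs L R lam rho ε dc (fun a b => vvSol L lam ε a b t)
        (fun a b => vcSol L R lam rho ε dc a b t) p.1 p.2 t) (Set.Ioc (y / 2) 1) t :=
    fun p hp t ht => (hasDerivAt_vcSol hL hR hRdc hrhoSum (hmem p hp).1 (hmem p hp).2.1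
      (hmem p hp).2.2 (hsub ht).1.ne' (xF_pos ⟨k, hk⟩ hlamPos hε (hsub ht).1).ne').hasDerivWithinAt
  have hbound : ∀ p ∈ S, ∀ t ∈ Set.Ioc (y / 2) 1,
      |vcRhs L R lam rho ε dc (fun a b => δll a b t) (fun a b => δlr a b t) p.1 p.2 t
        - vcRhs L R lam rho ε dc (fun a b => vvSol L lam ε a b t)
            (fun a b => vcSol L R lam rho ε dc a b t) p.1 p.2 t|
      ≤ (2 * p.1 / (y / 2) + 2 * p.2 * C)
        * ∑ q ∈ S, |δlr q.1 q.2 t - vcSol L R lam rho ε dc q.1 q.2 t| :=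
    fun p hp t ht => abs_vcRhs_sub_vcRhs_le hL1 hlamPos hε (half_pos hy.1) ht.1.le
      (hC t (Set.Ioc_subset_Icc_self ht)) (hmem p hp).1 (Finset.mem_product.1 hp).2
      fun u hu => eq_vvSol_of_CEvv hL hlamPos hlamSum hε hvv p.1 (hmem p hp).1 u hu t (hsub ht)
  have hone : ∀ p ∈ S, δlr p.1 p.2 1 = vcSol L R lam rho ε dc p.1 p.2 1 := fun p hp => by
    rw [hvc.2 p.1 (Finset.mem_product.1 hp).1 p.2 (Finset.mem_product.1 hp).2,
      vcSol_one hlamSum hε.ne']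
  exact eqOn_Ioc_of_abs_deriv_sub_le S hδ hsol hbound hone (k, j)
    (Finset.mem_product.2 ⟨hk, hj⟩) y ⟨half_lt_self hy.1, hy.2⟩

end CheckBlock

theorem statement_1_general
    (L R : Finset ℕ) (hR : R.Nonempty)
    (hL2 : ∀ k ∈ L, 2 ≤ k) (hR2 : ∀ k ∈ R, 2 ≤ k)
    (lam rho : ℕ → ℝ)
    (hlamPos : ∀ k ∈ L, 0 < lam k) (hlamSum : ∑ k ∈ L, lam k = 1)
    (hrhoSum : ∑ k ∈ R, rho k = 1)
    (ε : ℝ) (hε : ε ∈ Set.Ioo (0 : ℝ) 1)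
    (dc : ℕ) (hdc : dc = R.max' hR)
    (δll : ℕ → ℕ → ℝ → ℝ) (hvv : CEvv L lam ε δll)
    (δlr : ℕ → ℕ → ℝ → ℝ) (hvc : CEvc L R lam rho ε dc δll δlr) :
    ∀ s ∈ L, ∀ j ∈ Finset.Icc 1 (dc - 1), ∀ y ∈ Set.Ioc (0 : ℝ) 1,
      δlr s j y =
        (Ff L lam ε y * ((s : ℝ) * lhat lam ε s y / eF L lam ε y) - ε * lhat lam ε s y * (y ^ s - 1)) *
            ((xD L lam ε y / xF L lam ε y) * Gf L R lam rho ε dc j y - (if j = 1 then (1 : ℝ) else 0))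
        - ((s : ℝ) * lhat lam ε s y / eF L lam ε y) * Gf L R lam rho ε dc j y *
            ((Fd L lam ε y + xF L lam ε y) / 2 - ε * xF L lam ε y * y ^ s) :=
  eq_vcSol_of_CEvc hL2 (fun i hi => one_le_two.trans (hR2 i hi))
    (fun i hi => hdc ▸ R.le_max' i hi) hlamPos hlamSum hrhoSum hε.1 hvv hvc

theorem statement_1
    (L R : Finset ℕ) (hL : L.Nonempty) (hR : R.Nonempty)
    (hL2 : ∀ k ∈ L, 2 ≤ k) (hR2 : ∀ k ∈ R, 2 ≤ k)
    (lam rho : ℕ → ℝ)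
    (hlamPos : ∀ k ∈ L, 0 < lam k) (hlamSum : ∑ k ∈ L, lam k = 1)
    (hrhoPos : ∀ k ∈ R, 0 < rho k) (hrhoSum : ∑ k ∈ R, rho k = 1)
    (ε : ℝ) (hε : ε ∈ Set.Ioo (0 : ℝ) 1)
    (dc : ℕ) (hdc : dc = R.max' hR)
    (δll : ℕ → ℕ → ℝ → ℝ) (hvv : CEvv L lam ε δll)
    (δlr : ℕ → ℕ → ℝ → ℝ) (hvc : CEvc L R lam rho ε dc δll δlr) :
    ∀ s ∈ L, ∀ j ∈ Finset.Icc 1 (dc - 1), ∀ y ∈ Set.Ioc (0 : ℝ) 1,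
      δlr s j y =
        (Ff L lam ε y * ((s : ℝ) * lhat lam ε s y / eF L lam ε y) - ε * lhat lam ε s y * (y ^ s - 1)) *
            ((xD L lam ε y / xF L lam ε y) * Gf L R lam rho ε dc j y - (if j = 1 then (1 : ℝ) else 0))
        - ((s : ℝ) * lhat lam ε s y / eF L lam ε y) * Gf L R lam rho ε dc j y *
            ((Fd L lam ε y + xF L lam ε y) / 2 - ε * xF L lam ε y * y ^ s) :=
  statement_1_general L R hR hL2 hR2 lam rho hlamPos hlamSum hrhoSum ε hε dc hdc δll hvv δlr hvc

end LDPC
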